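/- Let K_y > 0, σ_n ≤ β_y - K_yδ_y with δ_y > 0, and suppose φ₁, φ₂ : ℝ → E satisfy ‖φ₁(t) - φ₂(t)‖ e^{-σ_n t} ≤ K_y e^{δ_φ} ‖y₁ - y₂‖ for all t ≤ 0 and every admissible σ_n in the interval (α_x + K_xδ_x, β_y - K_yδ_y), where δ_φ = δ_φ(σ_n) ≤ max{K_xδ_x/(σ_n-α_x), K_yδ_y/(β_y-σ_n), K_zδ_z/(β_z-σ_p)} < 1. Then, taking the limit σ_n → β_y - K_yδ_y, one obtains ‖φ₁(t) - φ₂(t)‖ ≤ K_y e · e^{(β_y - K_yδ_y)t} ‖y₁ - y₂‖ for all t ≤ 0. -/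
import Mathlib


open Real Set

theorem stmt_16 (E Y : Type*) [NormedAddCommGroup E] [NormedAddCommGroup Y]
    (Kx Ky Kz δx δy δz αx βy βz σp : ℝ)
    (hKx : 0 < Kx) (hKy : 0 < Ky) (hKz : 0 < Kz)
    (hδx : 0 < δx) (hδy : 0 < δy) (hδz : 0 < δz)
    (hord : αx + Kx * δx < βy - Ky * δy)
    (φ₁ φ₂ : ℝ → E) (y₁ y₂ : Y) (δφ : ℝ → ℝ)
    (hδφ : ∀ σn ∈ Set.Ioo (αx + Kx * δx) (βy - Ky * δy),
      δφ σn ≤ max (max (Kx * δx / (σn - αx)) (Ky * δy / (βy - σn)))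
        (Kz * δz / (βz - σp)) ∧ δφ σn < 1)
    (h : ∀ σn ∈ Set.Ioo (αx + Kx * δx) (βy - Ky * δy), ∀ t ≤ (0:ℝ),
      ‖φ₁ t - φ₂ t‖ * Real.exp (-σn * t) ≤ Ky * Real.exp (δφ σn) * ‖y₁ - y₂‖) :
    ∀ t ≤ (0:ℝ),
      ‖φ₁ t - φ₂ t‖ ≤
        Ky * Real.exp 1 * Real.exp ((βy - Ky * δy) * t) * ‖y₁ - y₂‖ := by
  intro t ht
  set a := αx + Kx * δx with ha
  set b := βy - Ky * δy with hb
  have hbmem : b ∈ closure (Set.Ioo a b) := by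
    rw [closure_Ioo hord.ne]
    exact Set.right_mem_Icc.2 hord.le
  have hbot : (nhdsWithin b (Set.Ioo a b)).NeBot :=
    mem_closure_iff_nhdsWithin_neBot.mp hbmem
  have tends : Filter.Tendsto
      (fun σn => Ky * Real.exp 1 * Real.exp (σn * t) * ‖y₁ - y₂‖)
      (nhdsWithin b (Set.Ioo a b))
      (nhds (Ky * Real.exp 1 * Real.exp (b * t) * ‖y₁ - y₂‖)) := by
    apply Filter.Tendsto.mono_left _ nhdsWithin_le_nhds
    exact Filter.Tendsto.mul_const _
      (Filter.Tendsto.const_mul _ ((Real.continuous_exp.tendsto _).comp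
        (Filter.Tendsto.mul_const t (Filter.tendsto_id (x := nhds b)))))
  refine ge_of_tendsto tends ?_
  filter_upwards [self_mem_nhdsWithin] with σn hσ
  have h1 := h σn hσ t ht
  have h2 := (hδφ σn hσ).2
  have hexp : Real.exp (δφ σn) ≤ Real.exp 1 := Real.exp_le_exp.2 h2.le
  have hkey : ‖φ₁ t - φ₂ t‖
      = ‖φ₁ t - φ₂ t‖ * Real.exp (-σn * t) * Real.exp (σn * t) := by
    rw [mul_assoc, ← Real.exp_add]
    ring_nf
    simp
  calc ‖φ₁ t - φ₂ t‖ = ‖φ₁ t - φ₂ t‖ * Real.exp (-σn * t) * Real.exp (σn * t) := hkey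
    _ ≤ Ky * Real.exp (δφ σn) * ‖y₁ - y₂‖ * Real.exp (σn * t) :=
        mul_le_mul_of_nonneg_right h1 (Real.exp_nonneg _)
    _ ≤ Ky * Real.exp 1 * Real.exp (σn * t) * ‖y₁ - y₂‖ := by
        have := mul_le_mul_of_nonneg_right
          (mul_le_mul_of_nonneg_left hexp hKy.le)
          (mul_nonneg (norm_nonneg (y₁ - y₂)) (Real.exp_nonneg (σn * t)))
        nlinarith [norm_nonneg (y₁ - y₂), Real.exp_nonneg (σn * t)]
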